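/- Let R = 4, B = {0,2}, L = {0,3,207}. There is no nontrivial min-set. Specifically, any min-set must contain −1 (the unique extreme cycle point for digits {0,3}), the transitions −1 → −52 → −13 → −55 (with digits 207, 0, 207 respectively, under g_l(t) = (t−l)/4) are possible, but −55 ≢ 3 (mod 4) and −55 ≢ 0 (mod 4), contradicting the necessary residue condition for min-set points. -/

import Mathlib

open Complex

/-- `m_B(x) = (1 + e^{2πi·2x})/2` for `R = 4`, `B = {0,2}`. -/
noncomputable def mB (x : ℝ) : ℂ :=
  (1 + Complex.exp (2 * Real.pi * Complex.I * (2 * x))) / 2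

/-- The transition maps `g_l(t) = (t - l)/4`. -/
noncomputable def g (l : ℤ) (t : ℝ) : ℝ := (t - (l : ℝ)) / 4

/-- A set `M` is invariant for the digit set `L`: possible transitions stay in `M`. -/
def IsInvSet (L : Finset ℤ) (M : Set ℝ) : Prop :=
  ∀ t ∈ M, ∀ l ∈ L, mB (g l t) ≠ 0 → g l t ∈ M

/-- A min-set: a nonempty finite invariant set which is minimal among such sets. -/
def IsMinSet (L : Finset ℤ) (M : Set ℝ) : Prop :=
  M.Finite ∧ M.Nonempty ∧ IsInvSet L M ∧
    ∀ M' ⊆ M, M'.Nonempty → IsInvSet L M' → M' = M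

/-!
Since `m_B(x) = 0` exactly when `4x` is an odd integer, the digit `0` maps every non-integer
point `t` of an invariant set to the non-integer `t / 4`, so a finite invariant set consists of
integers. At an integer `n` the digit of the same parity as `n` (`0` or `3`) gives a possible
transition, so every point is `≡ 0, 3 (mod 4)` and has `⌊n / 4⌋` as a successor; following
successors from a point of least modulus shows that a min-set contains `0` or `-1`. From `-1`
the digits `207, 0, 207` lead to `-55 ≡ 1 (mod 4)`, so `0` lies in the min-set, and since the
odd digits `3, 207` are impossible at `0`, the min-set is `{0}`.
-/

theorem mB_eq_zero_iff (x : ℝ) : mB x = 0 ↔ ∃ k : ℤ, 4 * x = 2 * k + 1 := by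
  have hπI : (Real.pi : ℂ) * I ≠ 0 := mul_ne_zero (ofReal_ne_zero.mpr Real.pi_ne_zero) I_ne_zero
  rw [mB, div_eq_zero_iff, or_iff_left two_ne_zero, add_eq_zero_iff_eq_neg', ← exp_pi_mul_I,
    exp_eq_exp_iff_exists_int]
  refine exists_congr fun k => ?_
  rw [← ofReal_inj (z := 4 * x), ← mul_right_inj' hπI (b := ((4 * x : ℝ) : ℂ))]
  push_cast
  constructor <;> intro h <;> linear_combination h

theorem mB_g_eq_zero_iff (l : ℤ) (t : ℝ) : mB (g l t) = 0 ↔ ∃ k : ℤ, t - l = 2 * k + 1 := by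
  rw [mB_eq_zero_iff, g, mul_div_cancel₀ _ four_ne_zero]

theorem mB_g_intCast_eq_zero_iff (l n : ℤ) : mB (g l n) = 0 ↔ Odd (n - l) := by
  rw [mB_g_eq_zero_iff]
  exact exists_congr fun k => by norm_cast

theorem mB_intCast_ne_zero (n : ℤ) : mB n ≠ 0 := by
  rw [Ne, mB_eq_zero_iff]
  rintro ⟨k, hk⟩
  have : 4 * n = 2 * k + 1 := by exact_mod_cast hk
  omega

theorem isInvSet_singleton_zero {L : Finset ℤ} (hL : ∀ l ∈ L, l ≠ 0 → Odd l) :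
    IsInvSet L {0} := by
  rintro _ rfl l hl hmB
  by_cases hl0 : l = 0
  · simp [hl0, g]
  · have hodd : Odd ((0 : ℤ) - l) := by simpa using hL l hl hl0
    exact absurd (by simpa using (mB_g_intCast_eq_zero_iff l 0).mpr hodd) hmB

namespace IsInvSet

variable {L : Finset ℤ} {M : Set ℝ}

theorem subset_range_intCast (hM : IsInvSet L M) (hfin : M.Finite) (h0 : 0 ∈ L) :
    M ⊆ Set.range ((↑) : ℤ → ℝ) := by
  by_contra hsub
  obtain ⟨t, ⟨htM, htZ⟩, hmin⟩ := Set.exists_min_image _ (|·|) hfin.sdiff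
    (Set.nonempty_of_not_subset hsub)
  have hmB : mB (g 0 t) ≠ 0 := fun h => by
    obtain ⟨k, hk⟩ := (mB_g_eq_zero_iff 0 t).mp h
    exact htZ ⟨2 * k + 1, by push_cast at hk ⊢; linarith⟩
  have hquarter : g 0 t ∉ Set.range ((↑) : ℤ → ℝ) := fun ⟨n, hn⟩ =>
    htZ ⟨4 * n, by simp only [g, Int.cast_zero, sub_zero] at hn; push_cast; linarith⟩
  have hle : |t| ≤ |t / 4| := by simpa [g] using hmin _ ⟨hM t htM 0 h0 hmB, hquarter⟩
  have ht : t ≠ 0 := fun h => htZ ⟨0, by simp [h]⟩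
  rw [abs_div, abs_of_pos (four_pos : (0 : ℝ) < 4)] at hle
  linarith [abs_pos.mpr ht]

theorem exists_eq_four_mul_add (hM : IsInvSet L M) (hfin : M.Finite) (h0 : 0 ∈ L) (h3 : 3 ∈ L)
    {n : ℤ} (hn : (n : ℝ) ∈ M) : ∃ m : ℤ, (n = 4 * m ∨ n = 4 * m + 3) ∧ (m : ℝ) ∈ M := by
  obtain ⟨l, hl, hdigit, hpar⟩ : ∃ l ∈ L, (l = 0 ∨ l = 3) ∧ Even (n - l) := by
    rcases Int.even_or_odd n with hn | hn
    · exact ⟨0, h0, Or.inl rfl, by simpa using hn⟩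
    · exact ⟨3, h3, Or.inr rfl, hn.sub_odd (by decide)⟩
  have hmem : g l n ∈ M :=
    hM _ hn l hl (by rw [Ne, mB_g_intCast_eq_zero_iff, Int.not_odd_iff_even]; exact hpar)
  obtain ⟨m, hm⟩ := hM.subset_range_intCast hfin h0 hmem
  refine ⟨m, ?_, hm ▸ hmem⟩
  have : n = 4 * m + l := by
    have : (n : ℝ) = 4 * m + l := by rw [hm, g]; ring
    exact_mod_cast this
  omega

theorem intCast_mem_of_g_eq (hM : IsInvSet L M) {l n : ℤ} (hl : l ∈ L) {t : ℝ} (ht : t ∈ M)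
    (h : g l t = n) : (n : ℝ) ∈ M :=
  h ▸ hM t ht l hl (h ▸ mB_intCast_ne_zero n)

theorem emod_four_eq_zero_or_three (hM : IsInvSet L M) (hfin : M.Finite) (h0 : 0 ∈ L)
    (h3 : 3 ∈ L) {n : ℤ} (hn : (n : ℝ) ∈ M) : n % 4 = 0 ∨ n % 4 = 3 := by
  obtain ⟨m, hnm, -⟩ := hM.exists_eq_four_mul_add hfin h0 h3 hn
  omega

theorem zero_mem_or_neg_one_mem (hM : IsInvSet L M) (hfin : M.Finite) (hne : M.Nonempty)
    (h0 : 0 ∈ L) (h3 : 3 ∈ L) : (0 : ℝ) ∈ M ∨ (-1 : ℝ) ∈ M := by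
  obtain ⟨t, htM, hmin⟩ := Set.exists_min_image M (|·|) hfin hne
  obtain ⟨n, rfl⟩ := hM.subset_range_intCast hfin h0 htM
  obtain ⟨m, hnm, hmM⟩ := hM.exists_eq_four_mul_add hfin h0 h3 htM
  have hle : |n| ≤ |m| := by exact_mod_cast hmin _ hmM
  rw [Int.abs_eq_natAbs, Int.abs_eq_natAbs, Nat.cast_le] at hle
  obtain rfl | rfl : n = 0 ∨ n = -1 := by omega
  · exact Or.inl (by simpa using htM)
  · exact Or.inr (by simpa using htM)

end IsInvSet

theorem g_207_neg_one : g 207 (-1) = -52 := by norm_num [g]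

theorem g_0_neg_52 : g 0 (-52) = -13 := by norm_num [g]

theorem g_207_neg_13 : g 207 (-13) = -55 := by norm_num [g]

theorem neg_one_notMem_of_isInvSet {M : Set ℝ} (hM : IsInvSet {0, 3, 207} M) (hfin : M.Finite) :
    (-1 : ℝ) ∉ M := by
  intro h1
  have h52 := hM.intCast_mem_of_g_eq (l := 207) (n := -52) (by decide) h1
    (by exact_mod_cast g_207_neg_one)
  have h13 := hM.intCast_mem_of_g_eq (l := 0) (n := -13) (by decide) h52
    (by exact_mod_cast g_0_neg_52)
  have h55 := hM.intCast_mem_of_g_eq (l := 207) (n := -55) (by decide) h13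
    (by exact_mod_cast g_207_neg_13)
  have := hM.emod_four_eq_zero_or_three hfin (by decide) (by decide) h55
  omega

theorem IsMinSet.eq_singleton_zero {M : Set ℝ} (h : IsMinSet {0, 3, 207} M) : M = {0} := by
  obtain ⟨hfin, hne, hM, hmin⟩ := h
  have h0M : (0 : ℝ) ∈ M :=
    (hM.zero_mem_or_neg_one_mem hfin hne (by decide) (by decide)).resolve_right
      (neg_one_notMem_of_isInvSet hM hfin)
  refine (hmin {0} (Set.singleton_subset_iff.mpr h0M) (Set.singleton_nonempty 0) ?_).symm
  exact isInvSet_singleton_zero (by decide)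

/-- for `L = {0,3,207}` there is no nontrivial min-set. Any nontrivial
min-set would contain `-1`; the transitions `-1 → -52 → -13 → -55` (digits 207, 0, 207)
are possible, but `-55 ≢ 3 (mod 4)` and `-55 ≢ 0 (mod 4)`. -/
theorem stmt10 :
    (∀ M : Set ℝ, IsMinSet ({0, 3, 207} : Finset ℤ) M → M ≠ {0} → (-1 : ℝ) ∈ M) ∧
    g 207 (-1) = -52 ∧ g 0 (-52) = -13 ∧ g 207 (-13) = -55 ∧
    mB (-52) ≠ 0 ∧ mB (-13) ≠ 0 ∧ mB (-55) ≠ 0 ∧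
    ¬ ((-55 : ℤ) % 4 = 3) ∧ ¬ ((-55 : ℤ) % 4 = 0) ∧
    (∀ M : Set ℝ, IsMinSet ({0, 3, 207} : Finset ℤ) M → M = {0}) := by
  refine ⟨fun M hM hne => absurd hM.eq_singleton_zero hne, g_207_neg_one, g_0_neg_52,
    g_207_neg_13, ?_, ?_, ?_, by decide, by decide, fun M hM => hM.eq_singleton_zero⟩ <;>
  exact_mod_cast mB_intCast_ne_zero _
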